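/- Let A be a measurement with n outcomes and B a measurement with m outcomes on ℂ^d, such that every effect of A and every effect of B is a nonzero orthogonal projection (Hermitian and idempotent). If F(A) = F(B), then A and B are post-processing equivalent: A ⪯ B and B ⪯ A. -/

import Mathlib

/-! Sharp effects that sum to `1` are mutually orthogonal projections, so the Fisher map of a
sharp measurement `B` fixes every vectorized effect `|B y⟩`. Applying the Fisher map of `A`
to `|B y⟩` instead gives `B y = ∑ x, tr (A x * B y) / tr (A x) • A x`; the coefficients are
nonnegative because `tr (A x * B y) = tr (B y * A x * B y)`, and they sum to `1` over `y`
because `∑ y, B y = 1`. So `Fisher A = Fisher B` forces `B ⪯ A`, and by symmetry `A ⪯ B`. -/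

open Matrix
open scoped Kronecker ComplexOrder

noncomputable section

/-- A measurement (POVM): a finite family of positive semidefinite matrices summing to `1`. -/
def IsMeasurement {ι κ : Type*} [Fintype ι] [DecidableEq ι] [Fintype κ]
    (A : κ → Matrix ι ι ℂ) : Prop :=
  (∀ x, (A x).PosSemidef) ∧ ∑ x, A x = 1

/-- `A` is a post-processing of `B`: `A ⪯ B`. -/
def PostProc {ι : Type*} {n m : ℕ}
    (A : Fin n → Matrix ι ι ℂ) (B : Fin m → Matrix ι ι ℂ) : Prop :=
  ∃ μ : Fin n → Fin m → ℝ,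
    (∀ x y, 0 ≤ μ x y) ∧ (∀ y, ∑ x, μ x y = 1) ∧
    (∀ x, A x = ∑ y, (μ x y : ℂ) • B y)

/-- The outer product `|E⟩⟨F|` of the vectorizations of two matrices. -/
def outerProd {ι : Type*} (E F : Matrix ι ι ℂ) : Matrix (ι × ι) (ι × ι) ℂ :=
  Matrix.of fun p q => E p.1 p.2 * star (F q.1 q.2)

/-- The (un-normalized) Fisher information map of a measurement. -/
noncomputable def Fisher {ι κ : Type*} [Fintype ι] [Fintype κ]
    (A : κ → Matrix ι ι ℂ) : Matrix (ι × ι) (ι × ι) ℂ :=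
  ∑ x, (Matrix.trace (A x))⁻¹ • outerProd (A x) (A x)

/-- The positive semidefinite square root, with the definition it had in the older Mathlib
(`Matrix.PosSemidef.sqrt`, since removed). -/
noncomputable def Matrix.PosSemidef.sqrt {n 𝕜 : Type*} [Fintype n] [DecidableEq n] [RCLike 𝕜]
    {A : Matrix n n 𝕜} (hA : A.PosSemidef) : Matrix n n 𝕜 :=
  hA.1.eigenvectorUnitary.1 * diagonal ((↑) ∘ (√·) ∘ hA.1.eigenvalues) *
  (star hA.1.eigenvectorUnitary : Matrix n n 𝕜)

/-- The generalized Fisher information map of a measurement, relative to a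
positive definite state `ρ` (with positive semidefinite square root `ρ^{1/2}`). -/
noncomputable def FisherRho {ι κ : Type*} [Fintype ι] [DecidableEq ι] [Fintype κ]
    {ρ : Matrix ι ι ℂ} (hρ : ρ.PosDef) (A : κ → Matrix ι ι ℂ) :
    Matrix (ι × ι) (ι × ι) ℂ :=
  ∑ x, (Matrix.trace (ρ * A x))⁻¹ •
    outerProd (hρ.posSemidef.sqrt * A x) (hρ.posSemidef.sqrt * A x)

/-- The height of a finite family of self-adjoint matrices: the infimum of the traces of
Hermitian matrices dominating every member in the Loewner order. -/
noncomputable def height {ι κ : Type*} [Fintype ι] [Fintype κ]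
    (X : κ → Matrix ι ι ℂ) : ℝ :=
  sInf { t : ℝ | ∃ H : Matrix ι ι ℂ, H.IsHermitian ∧
    (∀ i, (H - X i).PosSemidef) ∧ t = (Matrix.trace H).re }

theorem IsStarProjection.mul_eq_zero_of_add_le_one {R : Type*} [CStarAlgebra R]
    [PartialOrder R] [StarOrderedRing R] {p q : R} (hp : IsStarProjection p)
    (hq : IsStarProjection q) (hpq : p + q ≤ 1) : p * q = 0 := by
  have := (hp.le_iff_mul_eq_left hq.one_sub).mp (le_sub_iff_add_le.mpr hpq)
  rwa [mul_sub, mul_one, sub_eq_self] at this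

open scoped MatrixOrder Matrix.Norms.L2Operator in
theorem IsMeasurement.mul_eq_zero_of_isStarProjection {ι κ : Type*} [Fintype ι] [DecidableEq ι]
    [Fintype κ] [DecidableEq κ] {A : κ → Matrix ι ι ℂ} (hA : IsMeasurement A)
    (hproj : ∀ x, IsStarProjection (A x)) {x x' : κ} (hne : x ≠ x') : A x * A x' = 0 := by
  refine (hproj x).mul_eq_zero_of_add_le_one (hproj x') ?_
  rw [← hA.2, ← Finset.sum_pair hne]
  exact Finset.sum_le_univ_sum_of_nonneg fun z => (hA.1 z).nonneg

theorem Matrix.PosSemidef.trace_mul_nonneg_of_isStarProjection {ι : Type*} [Fintype ι]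
    {A P : Matrix ι ι ℂ} (hA : A.PosSemidef) (hP : IsStarProjection P) :
    0 ≤ trace (A * P) := by
  have : trace (A * P) = trace (Pᴴ * A * P) := by
    rw [isHermitian_iff_isSelfAdjoint.mpr hP.isSelfAdjoint |>.eq, Matrix.mul_assoc,
      trace_mul_comm P, Matrix.mul_assoc, hP.isIdempotentElem.eq]
  exact this ▸ (hA.conjTranspose_mul_mul_same P).trace_nonneg

theorem postProc_of_nonneg {ι : Type*} {n m : ℕ} {A : Fin n → Matrix ι ι ℂ}
    {B : Fin m → Matrix ι ι ℂ} (c : Fin n → Fin m → ℂ) (hc : ∀ x y, 0 ≤ c x y)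
    (hsum : ∀ y, ∑ x, c x y = 1) (hA : ∀ x, A x = ∑ y, c x y • B y) : PostProc A B := by
  have hre : ∀ x y, ((c x y).re : ℂ) = c x y :=
    fun x y => (Complex.eq_re_of_ofReal_le (hc x y)).symm
  refine ⟨fun x y => (c x y).re, fun x y => (Complex.nonneg_iff.mp (hc x y)).1, fun y => ?_,
    fun x => by simp only [hre, hA]⟩
  simpa using congrArg Complex.re (hsum y)

/-- The vectorization `|M⟩`, in the row-major order used by `outerProd` (Mathlib's
`Matrix.vec` is column-major). -/
def rowVec {ι : Type*} (M : Matrix ι ι ℂ) : ι × ι → ℂ := fun p => M p.1 p.2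

@[simp]
theorem rowVec_apply {ι : Type*} (M : Matrix ι ι ℂ) (i j : ι) : rowVec M (i, j) = M i j := rfl

theorem rowVec_injective {ι : Type*} : Function.Injective (rowVec : Matrix ι ι ℂ → ι × ι → ℂ) :=
  fun _ _ h => Matrix.ext fun i j => congrFun h (i, j)

section Fisher

variable {ι κ : Type*} [Fintype ι] [Fintype κ]

theorem outerProd_mulVec_rowVec (E F M : Matrix ι ι ℂ) :
    outerProd E F *ᵥ rowVec M = trace (Fᴴ * M) • rowVec E := by
  ext ⟨a, b⟩
  simp only [mulVec, dotProduct, outerProd, of_apply, Fintype.sum_prod_type, trace, diag,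
    mul_apply, conjTranspose_apply, Pi.smul_apply, rowVec_apply, smul_eq_mul, Finset.sum_mul]
  rw [Finset.sum_comm]
  exact Finset.sum_congr rfl fun i _ => Finset.sum_congr rfl fun j _ => mul_rotate _ _ _

theorem fisher_mulVec_rowVec (C : κ → Matrix ι ι ℂ) (M : Matrix ι ι ℂ) :
    Fisher C *ᵥ rowVec M = rowVec (∑ x, ((trace (C x))⁻¹ * trace ((C x)ᴴ * M)) • C x) := by
  ext ⟨a, b⟩
  simp [Fisher, sum_mulVec, smul_mulVec, outerProd_mulVec_rowVec, Matrix.sum_apply, smul_smul]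

theorem fisher_mulVec_rowVec_of_isStarProjection [DecidableEq ι] {B : κ → Matrix ι ι ℂ}
    (hB : IsMeasurement B) (hproj : ∀ y, IsStarProjection (B y)) {y : κ} (hy : B y ≠ 0) :
    Fisher B *ᵥ rowVec (B y) = rowVec (B y) := by
  classical
  rw [fisher_mulVec_rowVec, Finset.sum_eq_single y]
  · rw [(hB.1 y).isHermitian.eq, (hproj y).isIdempotentElem.eq,
      inv_mul_cancel₀ ((hB.1 y).trace_eq_zero_iff.not.mpr hy), one_smul]
  · intro y' _ hne
    rw [(hB.1 y').isHermitian.eq, hB.mul_eq_zero_of_isStarProjection hproj hne, trace_zero,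
      mul_zero, zero_smul]
  · simp

theorem postProc_of_fisher_eq [DecidableEq ι] {n m : ℕ} {A : Fin n → Matrix ι ι ℂ}
    {B : Fin m → Matrix ι ι ℂ} (hA : ∀ x, (A x).PosSemidef) (hA0 : ∀ x, A x ≠ 0)
    (hB : IsMeasurement B) (hprojB : ∀ y, IsStarProjection (B y)) (hB0 : ∀ y, B y ≠ 0)
    (h : Fisher A = Fisher B) : PostProc B A := by
  refine postProc_of_nonneg (fun y x => trace (A x * B y) / trace (A x))
    (fun y x => div_nonneg ((hA x).trace_mul_nonneg_of_isStarProjection (hprojB y))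
      (hA x).trace_nonneg) (fun x => ?_) (fun y => rowVec_injective ?_)
  · rw [← Finset.sum_div, ← trace_sum, ← Finset.mul_sum, hB.2, mul_one,
      div_self ((hA x).trace_eq_zero_iff.not.mpr (hA0 x))]
  · rw [← fisher_mulVec_rowVec_of_isStarProjection hB hprojB (hB0 y), ← h, fisher_mulVec_rowVec]
    simp_rw [(hA _).isHermitian.eq, div_eq_inv_mul]

end Fisher

/-- The Fisher information map is injective on sharp measurements, up to
post-processing equivalence. -/
theorem stmt11 {d n m : ℕ}
    (A : Fin n → Matrix (Fin d) (Fin d) ℂ) (B : Fin m → Matrix (Fin d) (Fin d) ℂ)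
    (hA : IsMeasurement A) (hB : IsMeasurement B)
    (hA0 : ∀ x, A x ≠ 0) (hB0 : ∀ y, B y ≠ 0)
    (hprojA : ∀ x, (A x).IsHermitian ∧ A x * A x = A x)
    (hprojB : ∀ y, (B y).IsHermitian ∧ B y * B y = B y)
    (h : Fisher A = Fisher B) :
    PostProc A B ∧ PostProc B A :=
  ⟨postProc_of_fisher_eq hB.1 hB0 hA (fun x => ⟨(hprojA x).2, (hprojA x).1⟩) hA0 h.symm,
    postProc_of_fisher_eq hA.1 hA0 hB (fun y => ⟨(hprojB y).2, (hprojB y).1⟩) hB0 h⟩
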